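/- The probability that a uniformly random d×d 0/1-matrix M has three columns m_i, m_j, m_k (with i, j, k pairwise distinct) satisfying m_i + m_j = m_k is Θ(d^3 (3/8)^d) as d → ∞; i.e., there exist constants 0 < c ≤ C and d_0 such that for all d ≥ d_0 this probability lies between c·d^3(3/8)^d and C·d^3(3/8)^d. -/

import Mathlib

open scoped Classical
open Filter Matrix

noncomputable section

/-- A 0/1-matrix (with `Bool` entries) viewed as a real matrix. -/
def bmToR {m n : Type*} (M : Matrix m n Bool) : Matrix m n ℝ :=
  fun i j => if M i j then 1 else 0

/-- `prob3col d` is the probability that a uniformly random `d × d` 0/1-matrix has three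
pairwise distinct columns `mᵢ, mⱼ, mₖ` with `mᵢ + mⱼ = mₖ` (as vectors in `ℝ^d`). -/
def prob3col (d : ℕ) : ℝ :=
  ((Finset.univ.filter (fun M : Matrix (Fin d) (Fin d) Bool =>
      ∃ i j k : Fin d, i ≠ j ∧ i ≠ k ∧ j ≠ k ∧
        (bmToR M)ᵀ i + (bmToR M)ᵀ j = (bmToR M)ᵀ k)).card : ℝ) / 2 ^ (d * d)

/-!
A column identity `mᵢ + mⱼ = mₖ` holds iff every row `g` satisfies `gᵢ + gⱼ = gₖ`, which 3 of the
8 patterns of `(gᵢ, gⱼ, gₖ)` do; the rows are independent, so a fixed triple works with probability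
exactly `(3/8)^d`. Up to swapping `i` and `j` there are `Θ(d³)` triples, and the union bound gives
the upper estimate. For the lower one, Bonferroni's inequality leaves the pair terms: distinct
triples give linearly independent relations `eᵢ + eⱼ - eₖ`, so a row satisfies both with
probability at most `1/4`, and these `O(d⁶)` terms of size `(1/4)^d = (2/3)^d (3/8)^d` are
negligible.
-/

namespace ThreeColumnSum

open Finset

theorem card_filter_comp_embedding {κ ι β : Type*} [Fintype κ] [DecidableEq κ] [Fintype ι]
    [DecidableEq ι] [Fintype β]
    (e : κ ↪ ι) (Q : (κ → β) → Prop) [DecidablePred Q] :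
    #{g : ι → β | Q (g ∘ e)} =
      #{f : κ → β | Q f} * Fintype.card β ^ (Fintype.card ι - Fintype.card κ) := by
  let E := (Equiv.piEquivPiSubtypeProd (· ∈ Set.range e) fun _ => β).trans
    (Equiv.prodCongr ((Equiv.ofInjective e e.injective).arrowCongr (Equiv.refl β)).symm
      (Equiv.refl _))
  have hE : ∀ g, g ∈ ({g | Q (g ∘ e)} : Finset _) ↔ E g ∈ ({f | Q f} : Finset _) ×ˢ univ := by
    intro g
    simp only [mem_filter, mem_univ, true_and, mem_product, and_true]
    rfl
  rw [card_equiv E hE, card_product, card_univ, Fintype.card_fun, Fintype.card_subtype_compl,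
    Fintype.card_range]

theorem card_filter_forall_row_mem {m n α : Type*} [Fintype m] [DecidableEq m] [Fintype n]
    [DecidableEq n] [Fintype α] (S : Finset (n → α)) :
    #{M : Matrix m n α | ∀ r, M r ∈ S} = #S ^ Fintype.card m := by
  have hrows : ∀ M, M ∈ ({M | ∀ r, M r ∈ S} : Finset (Matrix m n α)) ↔
      of.symm M ∈ Fintype.piFinset fun _ => S := by
    intro M
    simp only [mem_filter, mem_univ, true_and, Fintype.mem_piFinset]
    rfl
  rw [card_equiv of.symm hrows, Fintype.card_piFinset, prod_const, card_univ]

theorem sum_card_eq_sum_card_filter_mem {ι α : Type*} [DecidableEq α] {s : Finset ι}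
    {B : ι → Finset α} {U : Finset α} (hB : ∀ i ∈ s, B i ⊆ U) :
    ∑ i ∈ s, #(B i) = ∑ x ∈ U, #{i ∈ s | x ∈ B i} := by
  simp only [card_filter]
  rw [sum_comm]
  refine sum_congr rfl fun i hi => ?_
  rw [← card_filter, filter_mem_eq_inter, inter_eq_right.2 (hB i hi)]

theorem sum_card_sub_sum_card_inter_le_card_biUnion {ι α : Type*} [DecidableEq α]
    (s : Finset ι) (A : ι → Finset α) :
    ∑ i ∈ s, (#(A i) : ℤ) - ∑ p ∈ s.offDiag, (#(A p.1 ∩ A p.2) : ℤ) ≤ #(s.biUnion A) := by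
  set U := s.biUnion A
  set n : α → ℕ := fun x => #{i ∈ s | x ∈ A i}
  have hsingle : ∑ i ∈ s, (#(A i) : ℤ) = ∑ x ∈ U, (n x : ℤ) := by
    exact_mod_cast sum_card_eq_sum_card_filter_mem fun i hi => subset_biUnion_of_mem A hi
  have hpair :
      ∑ p ∈ s.offDiag, (#(A p.1 ∩ A p.2) : ℤ) = ∑ x ∈ U, ((n x : ℤ) * n x - n x) := by
    have h := sum_card_eq_sum_card_filter_mem (s := s.offDiag) (B := fun p => A p.1 ∩ A p.2)
      (U := U) fun p hp => inter_subset_left.trans (subset_biUnion_of_mem A (mem_offDiag.1 hp).1)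
    have hoff :
        ∀ x, #{p ∈ s.offDiag | x ∈ A p.1 ∩ A p.2} = #({i ∈ s | x ∈ A i}.offDiag) := by
      intro x
      congr 1
      ext p
      simp only [mem_filter, mem_offDiag, mem_inter]
      tauto
    simp only [hoff, offDiag_card] at h
    rw [← Nat.cast_sum, h, Nat.cast_sum]
    refine sum_congr rfl fun x _ => ?_
    rw [Nat.cast_sub (Nat.le_mul_self _), Nat.cast_mul]
  rw [hsingle, hpair, ← sum_sub_distrib]
  calc ∑ x ∈ U, ((n x : ℤ) - ((n x : ℤ) * n x - n x)) ≤ ∑ _x ∈ U, (1 : ℤ) :=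
        sum_le_sum fun x _ => by nlinarith [sq_nonneg ((n x : ℤ) - 1)]
    _ = #U := by simp

theorem exists_minor_ne_zero {K ι : Type*} [Field K] {w w' : ι → K}
    (h : LinearIndependent K ![w, w']) : ∃ x y, w x * w' y - w y * w' x ≠ 0 := by
  by_contra! hminor
  obtain ⟨x, hx⟩ : ∃ x, w x ≠ 0 := by
    by_contra! hw
    have := LinearIndependent.pair_iff.1 h 1 0 (by ext z; simp [hw z])
    simp at this
  have := LinearIndependent.pair_iff.1 h (w' x) (-w x) (by
    ext y
    simp only [Pi.add_apply, Pi.smul_apply, smul_eq_mul, Pi.zero_apply]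
    linear_combination -hminor x y)
  exact hx (by simpa using this.2)

theorem linearIndependent_pair_of_dotProduct_eq {K ι : Type*} [Field K] [Fintype ι]
    {w w' v : ι → K} (hne : w ≠ w') (hv : w ⬝ᵥ v ≠ 0) (hvv : w ⬝ᵥ v = w' ⬝ᵥ v) :
    LinearIndependent K ![w, w'] := by
  rw [LinearIndependent.pair_iff]
  intro s t hst
  have ht : t = -s := by
    have h := congrArg (· ⬝ᵥ v) hst
    simp only [add_dotProduct, smul_dotProduct, zero_dotProduct, smul_eq_mul, ← hvv] at h
    have hst' : (s + t) * (w ⬝ᵥ v) = 0 := by linear_combination h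
    linear_combination (mul_eq_zero.1 hst').resolve_right hv
  subst ht
  have : s • (w - w') = 0 := by rw [smul_sub, ← hst, neg_smul, sub_eq_add_neg]
  rcases smul_eq_zero.1 this with hs | hs
  · simp [hs]
  · exact absurd (sub_eq_zero.1 hs) hne

def boolToReal (b : Bool) : ℝ := if b then 1 else 0

theorem boolToReal_injective : Function.Injective boolToReal := by
  intro a b h
  cases a <;> cases b <;> simp_all [boolToReal]

def boolOrth {ι : Type*} [Fintype ι] (w : ι → ℝ) : Finset (ι → Bool) :=
  {g | (boolToReal ∘ g) ⬝ᵥ w = 0}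

theorem four_mul_card_boolOrth_inter_le {ι : Type*} [Fintype ι] {w w' : ι → ℝ}
    (h : LinearIndependent ℝ ![w, w']) :
    4 * #(boolOrth w ∩ boolOrth w') ≤ 2 ^ Fintype.card ι := by
  -- a nonzero minor in the columns `x, y` lets a solution be recovered from its values off `{x, y}`
  obtain ⟨x, y, hxy⟩ := exists_minor_ne_zero h
  have hne : x ≠ y := by rintro rfl; exact hxy (by ring)
  have hinj : Set.InjOn (fun g : ι → Bool => fun z : ({x, y}ᶜ : Finset ι) => g z)
      (boolOrth w ∩ boolOrth w' : Finset _) := by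
    intro g hg g' hg' heq
    simp only [coe_inter, Set.mem_inter_iff, mem_coe, boolOrth, mem_filter, mem_univ,
      true_and] at hg hg'
    set δ := boolToReal ∘ g - boolToReal ∘ g'
    have hδ : ∀ z, z ≠ x ∧ z ≠ y → δ z = 0 := fun z hz => by
      have := congrFun heq ⟨z, by simpa using hz⟩
      simp [δ, this]
    have hpair : ∀ u : ι → ℝ, δ ⬝ᵥ u = δ x * u x + δ y * u y := fun u =>
      Fintype.sum_eq_add x y hne fun z hz => by simp [hδ z hz]
    have hw : δ x * w x + δ y * w y = 0 := by
      rw [← hpair, sub_dotProduct, hg.1, hg'.1, sub_zero]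
    have hw' : δ x * w' x + δ y * w' y = 0 := by
      rw [← hpair, sub_dotProduct, hg.2, hg'.2, sub_zero]
    have hδx : δ x = 0 := by
      refine (mul_eq_zero.1 ?_).resolve_left hxy
      linear_combination w' y * hw - w y * hw'
    have hδy : δ y = 0 := by
      refine (mul_eq_zero.1 ?_).resolve_left hxy
      linear_combination w x * hw' - w' x * hw
    funext z
    apply boolToReal_injective
    have : δ z = 0 := by
      by_cases hzx : z = x
      · rwa [hzx]
      by_cases hzy : z = y
      · rwa [hzy]
      exact hδ z ⟨hzx, hzy⟩
    simpa [δ, sub_eq_zero] using this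
  have hcard : 2 ≤ Fintype.card ι := by
    simpa [card_pair hne] using card_le_univ ({x, y} : Finset ι)
  calc 4 * #(boolOrth w ∩ boolOrth w')
      ≤ 4 * Fintype.card (({x, y}ᶜ : Finset ι) → Bool) :=
        Nat.mul_le_mul_left _ (card_le_card_of_injOn _ (fun _ _ => mem_univ _) hinj)
    _ = 2 ^ Fintype.card ι := by
        rw [Fintype.card_fun, Fintype.card_bool, Fintype.card_coe, card_compl, card_pair hne,
          show 4 = 2 ^ 2 by rfl, ← pow_add, Nat.add_sub_cancel' hcard]

def sumVec {ι : Type*} (i j k : ι) : ι → ℝ := Pi.single i 1 + Pi.single j 1 - Pi.single k 1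

theorem sumVec_apply {ι : Type*} (i j k z : ι) :
    sumVec i j k z =
      (if z = i then 1 else 0) + (if z = j then 1 else 0) - (if z = k then 1 else 0) := by
  simp [sumVec, Pi.single_apply]

theorem sumVec_inj {ι : Type*} [LinearOrder ι] {i j k i' j' k' : ι}
    (hij : i < j) (hki : k ≠ i) (hkj : k ≠ j) (hij' : i' < j') (hki' : k' ≠ i') (hkj' : k' ≠ j')
    (h : sumVec i j k = sumVec i' j' k') : i = i' ∧ j = j' ∧ k = k' := by
  have hk : k = k' := by
    have := congrFun h k
    simp only [sumVec_apply, hki, hkj, if_true, if_false] at this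
    by_contra hne
    rw [if_neg hne] at this
    split_ifs at this <;> norm_num at this
  subst hk
  have hmem : ∀ z, z ≠ k → sumVec i j k z = 1 → z = i' ∨ z = j' := by
    intro z hz hz1
    rw [h, sumVec_apply, if_neg hz] at hz1
    by_contra! hne
    simp [hne.1, hne.2] at hz1
  have hi := hmem i hki.symm (by simp [sumVec_apply, hij.ne, hki.symm])
  have hj := hmem j hkj.symm (by simp [sumVec_apply, hij.ne', hkj.symm])
  refine ⟨?_, ?_, rfl⟩ <;> rcases hi with rfl | rfl <;> rcases hj with rfl | rfl <;> order

theorem dotProduct_sumVec {ι : Type*} [Fintype ι] (v : ι → ℝ) (i j k : ι) :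
    v ⬝ᵥ sumVec i j k = v i + v j - v k := by
  simp [sumVec, dotProduct_sub, dotProduct_add]

theorem mulVec_sumVec {m ι : Type*} [Fintype ι] (A : Matrix m ι ℝ) (i j k : ι) :
    A *ᵥ sumVec i j k = Aᵀ i + Aᵀ j - Aᵀ k := by
  ext r
  simp [mulVec, dotProduct_sumVec]

theorem boolToReal_add_sub_eq_zero_iff (a b c : Bool) :
    boolToReal a + boolToReal b - boolToReal c = 0 ↔ (!(a && b) && (c == (a || b))) = true := by
  cases a <;> cases b <;> cases c <;> norm_num [boolToReal]

theorem eight_mul_card_boolOrth_sumVec {ι : Type*} [Fintype ι] {i j k : ι}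
    (hij : i ≠ j) (hki : k ≠ i) (hkj : k ≠ j) :
    8 * #(boolOrth (sumVec i j k)) = 3 * 2 ^ Fintype.card ι := by
  let e : Fin 3 ↪ ι := ⟨![i, j, k], by
    intro a b
    fin_cases a <;> fin_cases b <;> simp [hij, hki, hkj, hij.symm, hki.symm, hkj.symm]⟩
  let Q : (Fin 3 → Bool) → Prop := fun f => (!(f 0 && f 1) && (f 2 == (f 0 || f 1))) = true
  have hrow : boolOrth (sumVec i j k) = ({g | Q (g ∘ e)} : Finset (ι → Bool)) := by
    ext g
    simp only [boolOrth, mem_filter, mem_univ, true_and, Function.comp_apply, dotProduct_sumVec]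
    exact boolToReal_add_sub_eq_zero_iff _ _ _
  obtain ⟨n, hn⟩ : ∃ n, Fintype.card ι = n + 3 :=
    Nat.exists_eq_add_of_le' (by simpa using Fintype.card_le_of_embedding e)
  rw [hrow, card_filter_comp_embedding e Q, (by decide : #{f | Q f} = 3), Fintype.card_bool,
    Fintype.card_fin, hn, Nat.add_sub_cancel]
  ring

theorem mulVec_bmToR_eq_zero_iff {m n : Type*} [Fintype n] (M : Matrix m n Bool) (w : n → ℝ) :
    bmToR M *ᵥ w = 0 ↔ ∀ r, M r ∈ boolOrth w := by
  simp only [funext_iff, boolOrth, mem_filter, mem_univ, true_and]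
  rfl

theorem card_filter_mulVec_bmToR_eq_zero {m n : Type*} [Fintype m] [DecidableEq m] [Fintype n]
    [DecidableEq n] (w : n → ℝ) :
    #{M : Matrix m n Bool | bmToR M *ᵥ w = 0} = #(boolOrth w) ^ Fintype.card m := by
  rw [← card_filter_forall_row_mem]
  exact congrArg card (filter_congr fun M _ => mulVec_bmToR_eq_zero_iff M w)

theorem card_filter_mulVec_bmToR_eq_zero_and {m n : Type*} [Fintype m] [DecidableEq m] [Fintype n]
    [DecidableEq n] (w w' : n → ℝ) :
    #{M : Matrix m n Bool | bmToR M *ᵥ w = 0 ∧ bmToR M *ᵥ w' = 0} =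
      #(boolOrth w ∩ boolOrth w') ^ Fintype.card m := by
  rw [← card_filter_forall_row_mem]
  exact congrArg card (filter_congr fun M _ => by
    simp only [mulVec_bmToR_eq_zero_iff, mem_inter, forall_and])

def sumTriples (d : ℕ) : Finset (Fin d × Fin d × Fin d) :=
  {t | t.1 < t.2.1 ∧ t.2.2 ≠ t.1 ∧ t.2.2 ≠ t.2.1}

def sumEvent {d : ℕ} (t : Fin d × Fin d × Fin d) : Finset (Matrix (Fin d) (Fin d) Bool) :=
  {M | bmToR M *ᵥ sumVec t.1 t.2.1 t.2.2 = 0}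

theorem prob3col_eq (d : ℕ) :
    prob3col d = #((sumTriples d).biUnion sumEvent) / 2 ^ (d * d) := by
  unfold prob3col
  congr 3
  ext M
  simp only [mem_filter, mem_univ, true_and, mem_biUnion, sumTriples, sumEvent, mulVec_sumVec,
    sub_eq_zero]
  constructor
  · rintro ⟨i, j, k, hij, hik, hjk, h⟩
    rcases hij.lt_or_gt with hlt | hlt
    · exact ⟨(i, j, k), ⟨hlt, hik.symm, hjk.symm⟩, h⟩
    · exact ⟨(j, i, k), ⟨hlt, hjk.symm, hik.symm⟩, (add_comm _ _).trans h⟩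
  · rintro ⟨⟨i, j, k⟩, ⟨hij, hki, hkj⟩, h⟩
    exact ⟨i, j, k, hij.ne, hki.symm, hkj.symm, h⟩

theorem card_sumEvent {d : ℕ} {t : Fin d × Fin d × Fin d} (ht : t ∈ sumTriples d) :
    (#(sumEvent t) : ℝ) = (3 / 8) ^ d * 2 ^ (d * d) := by
  obtain ⟨i, j, k⟩ := t
  simp only [sumTriples, mem_filter, mem_univ, true_and] at ht
  have hrow := eight_mul_card_boolOrth_sumVec ht.1.ne ht.2.1 ht.2.2
  rw [Fintype.card_fin] at hrow
  have hrowR : (#(boolOrth (sumVec i j k)) : ℝ) = 3 / 8 * 2 ^ d := by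
    have := congrArg (Nat.cast (R := ℝ)) hrow
    push_cast at this
    linarith
  rw [sumEvent, card_filter_mulVec_bmToR_eq_zero, Fintype.card_fin, Nat.cast_pow, hrowR, mul_pow,
    ← pow_mul]

theorem card_sumEvent_inter_le {d : ℕ} {t t' : Fin d × Fin d × Fin d} (ht : t ∈ sumTriples d)
    (ht' : t' ∈ sumTriples d) (hne : t ≠ t') :
    (#(sumEvent t ∩ sumEvent t') : ℝ) ≤ (1 / 4) ^ d * 2 ^ (d * d) := by
  obtain ⟨i, j, k⟩ := t
  obtain ⟨i', j', k'⟩ := t'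
  simp only [sumTriples, mem_filter, mem_univ, true_and] at ht ht'
  have hvec : sumVec i j k ≠ sumVec i' j' k' := fun h => by
    obtain ⟨rfl, rfl, rfl⟩ := sumVec_inj ht.1 ht.2.1 ht.2.2 ht'.1 ht'.2.1 ht'.2.2 h
    exact hne rfl
  have hindep : LinearIndependent ℝ ![sumVec i j k, sumVec i' j' k'] :=
    linearIndependent_pair_of_dotProduct_eq (v := 1) hvec
      (by rw [dotProduct_comm, dotProduct_sumVec]; norm_num)
      (by rw [dotProduct_comm, dotProduct_sumVec, dotProduct_comm, dotProduct_sumVec]; simp)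
  have hrow := four_mul_card_boolOrth_inter_le hindep
  rw [Fintype.card_fin] at hrow
  have hrowR :
      (#(boolOrth (sumVec i j k) ∩ boolOrth (sumVec i' j' k')) : ℝ) ≤ 1 / 4 * 2 ^ d := by
    have := (Nat.cast_le (α := ℝ)).2 hrow
    push_cast at this
    linarith
  rw [sumEvent, sumEvent, ← filter_and, card_filter_mulVec_bmToR_eq_zero_and, Fintype.card_fin,
    Nat.cast_pow, pow_mul, ← mul_pow]
  exact pow_le_pow_left₀ (Nat.cast_nonneg _) hrowR d

theorem card_sumTriples_le (d : ℕ) : #(sumTriples d) ≤ d ^ 3 := by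
  calc #(sumTriples d) ≤ #(univ : Finset (Fin d × Fin d × Fin d)) := card_le_univ _
    _ = d ^ 3 := by rw [card_univ, Fintype.card_prod, Fintype.card_prod, Fintype.card_fin]; ring

theorem div_three_pow_three_le_card_sumTriples (d : ℕ) : (d / 3) ^ 3 ≤ #(sumTriples d) := by
  set q := d / 3
  have hq : 3 * q ≤ d := Nat.mul_div_le d 3
  let f : Fin q × Fin q × Fin q → Fin d × Fin d × Fin d := fun p =>
    (⟨p.1, by omega⟩, ⟨q + p.2.1, by omega⟩, ⟨2 * q + p.2.2, by omega⟩)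
  calc (d / 3) ^ 3 = #(univ : Finset (Fin q × Fin q × Fin q)) := by
        rw [card_univ, Fintype.card_prod, Fintype.card_prod, Fintype.card_fin]; ring
    _ ≤ #(sumTriples d) := card_le_card_of_injOn f (fun p _ => by
          simp only [sumTriples, coe_filter, mem_univ, true_and, Set.mem_ofPred_eq, f,
            Fin.mk_lt_mk, ne_eq, Fin.mk.injEq]
          omega) (fun p _ p' _ h => by
          simp only [f, Prod.mk.injEq, Fin.mk.injEq] at h
          ext <;> omega)

theorem prob3col_le (d : ℕ) : prob3col d ≤ (d : ℝ) ^ 3 * (3 / 8) ^ d := by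
  rw [prob3col_eq, div_le_iff₀ (by positivity)]
  calc (#((sumTriples d).biUnion sumEvent) : ℝ)
      ≤ ∑ t ∈ sumTriples d, (#(sumEvent t) : ℝ) := by exact_mod_cast card_biUnion_le
    _ = #(sumTriples d) * ((3 / 8) ^ d * 2 ^ (d * d)) := by
        rw [sum_congr rfl fun t ht => card_sumEvent ht, sum_const, nsmul_eq_mul]
    _ ≤ d ^ 3 * ((3 / 8) ^ d * 2 ^ (d * d)) := by
        gcongr
        exact_mod_cast card_sumTriples_le d
    _ = _ := by ring

theorem le_prob3col {d : ℕ} (hd : 9 ≤ d) (hsmall : (d : ℝ) ^ 3 * (2 / 3) ^ d ≤ 1 / 2) :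
    (d : ℝ) ^ 3 * (3 / 8) ^ d / 128 ≤ prob3col d := by
  set T := sumTriples d
  set P : ℝ := (3 / 8) ^ d * 2 ^ (d * d)
  have hP : 0 ≤ P := by positivity
  have hTle : (#T : ℝ) ≤ d ^ 3 := by exact_mod_cast card_sumTriples_le d
  have hTge : (d : ℝ) ^ 3 ≤ 64 * #T := by
    have h := div_three_pow_three_le_card_sumTriples d
    have hq : d ≤ 4 * (d / 3) := by omega
    have : d ^ 3 ≤ 64 * #T := calc
      d ^ 3 ≤ (4 * (d / 3)) ^ 3 := Nat.pow_le_pow_left hq 3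
      _ = 64 * (d / 3) ^ 3 := by ring
      _ ≤ 64 * #T := Nat.mul_le_mul_left _ h
    exact_mod_cast this
  have hsingle : ∑ t ∈ T, (#(sumEvent t) : ℝ) = #T * P := by
    rw [sum_congr rfl fun t ht => card_sumEvent ht, sum_const, nsmul_eq_mul]
  have hpair : ∑ p ∈ T.offDiag, (#(sumEvent p.1 ∩ sumEvent p.2) : ℝ) ≤
      #T * #T * ((2 / 3) ^ d * P) := by
    calc ∑ p ∈ T.offDiag, (#(sumEvent p.1 ∩ sumEvent p.2) : ℝ)
        ≤ ∑ _p ∈ T.offDiag, (2 / 3 : ℝ) ^ d * P := sum_le_sum fun p hp => by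
          obtain ⟨h1, h2, hne⟩ := mem_offDiag.1 hp
          calc (#(sumEvent p.1 ∩ sumEvent p.2) : ℝ) ≤ (1 / 4) ^ d * 2 ^ (d * d) :=
                card_sumEvent_inter_le h1 h2 hne
            _ = (2 / 3) ^ d * P := by rw [← mul_assoc, ← mul_pow]; norm_num
      _ ≤ #T * #T * ((2 / 3) ^ d * P) := by
        have hoff : (#T.offDiag : ℝ) ≤ #T * #T := by
          exact_mod_cast (offDiag_card T).trans_le (Nat.sub_le _ _)
        rw [sum_const, nsmul_eq_mul]
        exact mul_le_mul_of_nonneg_right hoff (by positivity)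
  have hpairs_small : (#T : ℝ) * #T * ((2 / 3) ^ d * P) ≤ #T * P / 2 := by
    calc (#T : ℝ) * #T * ((2 / 3) ^ d * P) ≤ #T * d ^ 3 * ((2 / 3) ^ d * P) := by gcongr
      _ = #T * (d ^ 3 * (2 / 3) ^ d) * P := by ring
      _ ≤ #T * (1 / 2) * P := by gcongr
      _ = #T * P / 2 := by ring
  have hbonf := (Int.cast_le (R := ℝ)).2 (sum_card_sub_sum_card_inter_le_card_biUnion T sumEvent)
  push_cast at hbonf
  rw [prob3col_eq, le_div_iff₀ (by positivity)]
  calc (d : ℝ) ^ 3 * (3 / 8) ^ d / 128 * 2 ^ (d * d) = d ^ 3 / 64 * P / 2 := by ring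
    _ ≤ #T * P / 2 := by gcongr; linarith
    _ ≤ #T * P - #T * #T * ((2 / 3) ^ d * P) := by linarith
    _ ≤ #(T.biUnion sumEvent) := by linarith

end ThreeColumnSum

/-- The probability that a random `d × d` 0/1-matrix has three pairwise distinct columns
with `mᵢ + mⱼ = mₖ` is `Θ(d^3 (3/8)^d)`. -/
theorem stmt19 : ∃ c C : ℝ, 0 < c ∧ c ≤ C ∧ ∃ d0 : ℕ, ∀ d : ℕ, d0 ≤ d →
    c * (d : ℝ) ^ 3 * (3 / 8 : ℝ) ^ d ≤ prob3col d ∧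
      prob3col d ≤ C * (d : ℝ) ^ 3 * (3 / 8 : ℝ) ^ d := by
  have hsmall : ∀ᶠ d : ℕ in atTop, (d : ℝ) ^ 3 * (2 / 3) ^ d ≤ 1 / 2 :=
    (tendsto_pow_const_mul_const_pow_of_lt_one 3 (by norm_num) (by norm_num)).eventually
      (ge_mem_nhds (by norm_num))
  obtain ⟨d0, hd0⟩ := eventually_atTop.1 (hsmall.and (eventually_ge_atTop 9))
  refine ⟨1 / 128, 1, by norm_num, by norm_num, d0, fun d hd => ?_⟩
  obtain ⟨hsmall_d, h9⟩ := hd0 d hd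
  constructor
  · linarith [ThreeColumnSum.le_prob3col h9 hsmall_d]
  · linarith [ThreeColumnSum.prob3col_le d]
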